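/- arXiv:1911.09394 — 6 statements merged into one kernel-verified Lean document; each statement's English description precedes it below -/
import Mathlib

section
/- Let ⟨A, F⟩ be a subdirect product of a family of matrices ⟨A_i, F_i⟩ (i ∈ I) in the sense of non-indexed products: A is a subalgebra of the non-indexed product ⊗_{i∈I} A_i (whose n-ary operations are I-indexed families of n-ary terms of the respective languages, acting coordinatewise), F = A ∩ ∏_{i∈I} F_i, and all projections π_i : A → A_i are surjective. If F is nonempty, then for all tuples a, c ∈ A: (a, c) belongs to the Leibniz congruence Ω^A(F) if and only if for every i ∈ I, (a(i), c(i)) belongs to Ω^{A_i}(F_i). -/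
/-- An algebraic language: a family of operation symbols indexed by arity.
(Following the paper, there are no nullary symbols; constants are treated as
unary constant operations where needed.) -/
structure Lang : Type 1 where
  ops : ℕ → Type

/-- An algebra for a language `L`. -/
structure Alg (L : Lang) : Type 1 where
  carrier : Type
  interp : ∀ {n : ℕ}, L.ops n → (Fin n → carrier) → carrier

/-- Terms of the language `L` over a type `V` of variables. -/
inductive Term (L : Lang) (V : Type) : Type
  | var : V → Term L V
  | op : ∀ {n : ℕ}, L.ops n → (Fin n → Term L V) → Term L V

/-- Evaluation of a term in an algebra under an assignment of the variables. -/
def Term.eval {L : Lang} {V : Type} (A : Alg L) (v : V → A.carrier) :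
    Term L V → A.carrier
  | .var x => v x
  | .op f ts => A.interp f (fun i => Term.eval A v (ts i))

/-- `θ` is a congruence of the algebra `A`. -/
def IsCongruence {L : Lang} (A : Alg L) (θ : A.carrier → A.carrier → Prop) : Prop :=
  Equivalence θ ∧
    ∀ (n : ℕ) (f : L.ops n) (x y : Fin n → A.carrier),
      (∀ i, θ (x i) (y i)) → θ (A.interp f x) (A.interp f y)

/-- A relation `θ` is compatible with a subset `F`: related elements are either
both in or both out of `F` (stated one-sidedly; symmetry gives the rest). -/
def Compatible {L : Lang} (A : Alg L) (F : Set A.carrier)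
    (θ : A.carrier → A.carrier → Prop) : Prop :=
  ∀ a b : A.carrier, θ a b → a ∈ F → b ∈ F

/-- `θ` is the Leibniz congruence of `F` on `A`: the largest congruence of `A`
compatible with `F`. -/
def IsLeibniz {L : Lang} (A : Alg L) (F : Set A.carrier)
    (θ : A.carrier → A.carrier → Prop) : Prop :=
  IsCongruence A θ ∧ Compatible A F θ ∧
    ∀ θ', IsCongruence A θ' → Compatible A F θ' → ∀ a b, θ' a b → θ a b

/-- The non-indexed product language of a family of languages: its `n`-ary
symbols are `I`-indexed families of `n`-ary terms of the respective languages. -/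
def prodLang {ι : Type} (L : ι → Lang) : Lang where
  ops n := ∀ i, Term (L i) (Fin n)

/-- The non-indexed product of a family of algebras: the family-of-terms
operations act coordinatewise. -/
def prodAlg {ι : Type} {L : ι → Lang} (A : ∀ i, Alg (L i)) : Alg (prodLang L) where
  carrier := ∀ i, (A i).carrier
  interp f x i := Term.eval (A i) (fun k => x k i) (f i)

/-- A subset `S` of an algebra is closed under the operations. -/
def OpClosed {L : Lang} (A : Alg L) (S : Set A.carrier) : Prop :=
  ∀ (n : ℕ) (f : L.ops n) (x : Fin n → A.carrier),
    (∀ i, x i ∈ S) → A.interp f x ∈ S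

/-- The subalgebra of `A` with universe the closed subset `S`. -/
def subAlg {L : Lang} (A : Alg L) (S : Set A.carrier) (h : OpClosed A S) :
    Alg L where
  carrier := {x // x ∈ S}
  interp f x := ⟨A.interp f (fun i => (x i).1), h _ f _ (fun i => (x i).2)⟩

/-!
The coordinatewise relation `∀ i, Ω(Fᵢ)` is a congruence of `A` compatible with `F`, hence
contained in `Ω(F)`. Conversely, the image of `Ω(F)` under the surjection `πᵢ` is a congruence of
`Aᵢ` compatible with `Fᵢ`, hence contained in `Ω(Fᵢ)`. This rests on the product language being
able to act on one coordinate alone: the symbol that is an operation of `Lᵢ` at `i` and the first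
variable elsewhere lifts the operations of `Aᵢ` to `A`, and the binary symbol that is the first
variable at `i` and the second elsewhere pastes two tuples. Pasting gives transitivity, and
pasting with a fixed element of `F` reduces membership in `F` to membership at `i`.
-/

theorem IsCongruence.eval {L : Lang} {V : Type} {A : Alg L} {θ : A.carrier → A.carrier → Prop}
    (hθ : IsCongruence A θ) (t : Term L V) {u w : V → A.carrier} (h : ∀ v, θ (u v) (w v)) :
    θ (t.eval A u) (t.eval A w) := by
  induction t with
  | var x => exact h x
  | op f ts ih => exact hθ.2 _ f _ _ ih

theorem IsCongruence.restrict {L : Lang} {A : Alg L} {S : Set A.carrier} (hS : OpClosed A S)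
    {θ : A.carrier → A.carrier → Prop} (hθ : IsCongruence A θ) :
    IsCongruence (subAlg A S hS) (fun a b => θ a.1 b.1) :=
  ⟨⟨fun a => hθ.1.refl a.1, hθ.1.symm, hθ.1.trans⟩, fun _ f _ _ h => hθ.2 _ f _ _ h⟩

theorem Compatible.restrict {L : Lang} {A : Alg L} {S : Set A.carrier} (hS : OpClosed A S)
    {F : Set A.carrier} {θ : A.carrier → A.carrier → Prop} (hθ : Compatible A F θ) :
    Compatible (subAlg A S hS) {a | a.1 ∈ F} (fun a b => θ a.1 b.1) :=
  fun a b h => hθ a.1 b.1 h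

section Product

variable {ι : Type} {L : ι → Lang} {A : ∀ i, Alg (L i)}

theorem isCongruence_prodAlg {θ : ∀ i, (A i).carrier → (A i).carrier → Prop}
    (hθ : ∀ i, IsCongruence (A i) (θ i)) :
    IsCongruence (prodAlg A) (fun x y => ∀ i, θ i (x i) (y i)) :=
  ⟨⟨fun x i => (hθ i).1.refl (x i), fun h i => (hθ i).1.symm (h i),
      fun h h' i => (hθ i).1.trans (h i) (h' i)⟩,
    fun _ f _ _ h i => (hθ i).eval (f i) fun k => h k i⟩

theorem compatible_prodAlg {F : ∀ i, Set (A i).carrier}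
    {θ : ∀ i, (A i).carrier → (A i).carrier → Prop} (hθ : ∀ i, Compatible (A i) (F i) (θ i)) :
    Compatible (prodAlg A) {x | ∀ i, x i ∈ F i} (fun x y => ∀ i, θ i (x i) (y i)) :=
  fun _ _ h hx i => hθ i _ _ (h i) (hx i)

variable [DecidableEq ι]

def pasteOp (L : ι → Lang) (i : ι) : (prodLang L).ops 2 :=
  Function.update (fun j => (Term.var 1 : Term (L j) (Fin 2))) i (Term.var 0)

def liftOp (L : ι → Lang) (i : ι) {n : ℕ} (f : (L i).ops (n + 1)) : (prodLang L).ops (n + 1) :=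
  Function.update (fun j => (Term.var 0 : Term (L j) (Fin (n + 1)))) i (Term.op f Term.var)

theorem prodAlg_interp_liftOp_self (i : ι) {n : ℕ} (f : (L i).ops (n + 1))
    (x : Fin (n + 1) → (prodAlg A).carrier) :
    (prodAlg A).interp (liftOp L i f) x i = (A i).interp f (fun k => x k i) := by
  simp only [prodAlg, liftOp, Function.update_self]
  rfl

variable {S : Set (prodAlg A).carrier} {hS : OpClosed (prodAlg A) S}

def paste (i : ι) (a c : (subAlg (prodAlg A) S hS).carrier) :
    (subAlg (prodAlg A) S hS).carrier :=
  (subAlg (prodAlg A) S hS).interp (pasteOp L i) ![a, c]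

theorem paste_val (i : ι) (a c : (subAlg (prodAlg A) S hS).carrier) :
    (paste i a c).1 = Function.update c.1 i (a.1 i) := by
  funext j
  by_cases hj : j = i
  · subst hj
    simp [paste, subAlg, prodAlg, pasteOp, Term.eval]
  · simp [paste, subAlg, prodAlg, pasteOp, Term.eval, hj]

theorem paste_eq_right {i : ι} {a c : (subAlg (prodAlg A) S hS).carrier} (h : a.1 i = c.1 i) :
    paste i a c = c :=
  Subtype.ext (by rw [paste_val, h]; exact Function.update_eq_self i c.1)

theorem IsCongruence.rel_paste {θ : (subAlg (prodAlg A) S hS).carrier →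
      (subAlg (prodAlg A) S hS).carrier → Prop}
    (hθ : IsCongruence (subAlg (prodAlg A) S hS) θ) (i : ι)
    {a c a' c' : (subAlg (prodAlg A) S hS).carrier} (h : θ a c) (h' : θ a' c') :
    θ (paste i a a') (paste i c c') :=
  hθ.2 2 _ ![a, a'] ![c, c'] (Fin.forall_fin_two.2 ⟨h, h'⟩)

end Product

section Projection

variable {ι : Type} {L : ι → Lang} {A : ∀ i, Alg (L i)}
  {S : Set (prodAlg A).carrier} {hS : OpClosed (prodAlg A) S}
  {θ : (subAlg (prodAlg A) S hS).carrier → (subAlg (prodAlg A) S hS).carrier → Prop}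

theorem IsCongruence.map_proj (hθ : IsCongruence (subAlg (prodAlg A) S hS) θ) (i : ι)
    (hsurj : Function.Surjective fun s : (subAlg (prodAlg A) S hS).carrier => s.1 i) :
    IsCongruence (A i) (Relation.Map θ (fun s => s.1 i) (fun s => s.1 i)) := by
  classical
  have refl (x : (A i).carrier) : Relation.Map θ (fun s => s.1 i) (fun s => s.1 i) x x :=
    let ⟨a, ha⟩ := hsurj x
    ⟨a, a, hθ.1.refl a, ha, ha⟩
  refine ⟨⟨refl, ?_, ?_⟩, ?_⟩
  · rintro _ _ ⟨a, c, h, rfl, rfl⟩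
    exact ⟨c, a, hθ.1.symm h, rfl, rfl⟩
  · rintro _ _ _ ⟨a, c, h, rfl, rfl⟩ ⟨a', c', h', hca', rfl⟩
    -- paste i a a' ≡ paste i c a' = a' ≡ c'
    have h₁ := hθ.rel_paste i h (hθ.1.refl a')
    rw [paste_eq_right hca'.symm] at h₁
    exact ⟨paste i a a', c', hθ.1.trans h₁ h',
      (congrFun (paste_val i a a') i).trans (Function.update_self i _ a'.1), rfl⟩
  · rintro (_ | n) f x y hxy
    · rw [Subsingleton.elim x y]
      exact refl _
    · choose as cs h has hcs using hxy
      refine ⟨_, _, hθ.2 _ (liftOp L i f) as cs h, ?_, ?_⟩ <;>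
        simp only [subAlg, prodAlg_interp_liftOp_self, has, hcs]

theorem Compatible.map_proj {F : ∀ i, Set (A i).carrier}
    (hθ : IsCongruence (subAlg (prodAlg A) S hS) θ)
    (hF : Compatible (subAlg (prodAlg A) S hS) {s | ∀ i, s.1 i ∈ F i} θ)
    (hne : ∃ s : (subAlg (prodAlg A) S hS).carrier, ∀ i, s.1 i ∈ F i) (i : ι) :
    Compatible (A i) (F i) (Relation.Map θ (fun s => s.1 i) (fun s => s.1 i)) := by
  classical
  rintro _ _ ⟨a, c, h, rfl, rfl⟩ ha
  obtain ⟨s, hs⟩ := hne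
  have mem (b : (subAlg (prodAlg A) S hS).carrier) :
      (∀ j, (paste i b s).1 j ∈ F j) ↔ b.1 i ∈ F i := by
    rw [paste_val, Function.forall_update_iff s.1 (fun j x => x ∈ F j)]
    exact and_iff_left fun j _ => hs j
  exact (mem c).1 (hF _ _ (hθ.rel_paste i h (hθ.1.refl s)) ((mem a).2 ha))

end Projection

/-- let `⟨A, F⟩` be a subdirect product (with surjective
projections) of the matrices `⟨A i, Fi i⟩` in the sense of non-indexed
products, where `A` is the subalgebra determined by the closed set `S` and
`F = S ∩ ∏ᵢ Fi i`.  If `F` is nonempty, then two tuples are related by the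
Leibniz congruence of `F` iff their components are related by the Leibniz
congruences of the `Fi i`. -/
theorem leibniz_of_nonindexed_subdirect_product
    {ι : Type} {L : ι → Lang} (A : ∀ i, Alg (L i))
    (Fi : ∀ i, Set (A i).carrier)
    (S : Set (prodAlg A).carrier) (hS : OpClosed (prodAlg A) S)
    (hsurj : ∀ i, Function.Surjective
      (fun s : (subAlg (prodAlg A) S hS).carrier => s.1 i))
    (θ : (subAlg (prodAlg A) S hS).carrier →
         (subAlg (prodAlg A) S hS).carrier → Prop)
    (hθ : IsLeibniz (subAlg (prodAlg A) S hS)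
      {s : (subAlg (prodAlg A) S hS).carrier | ∀ i, s.1 i ∈ Fi i} θ)
    (θi : ∀ i, (A i).carrier → (A i).carrier → Prop)
    (hθi : ∀ i, IsLeibniz (A i) (Fi i) (θi i))
    (hne : ∃ s : (subAlg (prodAlg A) S hS).carrier, ∀ i, s.1 i ∈ Fi i) :
    ∀ a c : (subAlg (prodAlg A) S hS).carrier,
      θ a c ↔ ∀ i, θi i (a.1 i) (c.1 i) := by
  intro a c
  constructor
  · intro h i
    exact (hθi i).2.2 _ (hθ.1.map_proj i (hsurj i)) (Compatible.map_proj hθ.1 hθ.2.1 hne i)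
      _ _ ⟨a, c, h, rfl, rfl⟩
  · intro h
    exact hθ.2.2 _ ((isCongruence_prodAlg fun i => (hθi i).1).restrict hS)
      ((compatible_prodAlg fun i => (hθi i).2.1).restrict hS) a c h
end

section
/- If ⟨A, F⟩ is a subdirect product of matrices ⟨A_i, F_i⟩ (non-indexed sense, F nonempty), then the reduction ⟨A, F⟩* = ⟨A/Ω^A F, F/Ω^A F⟩ embeds as a subdirect product into the non-indexed product of the reductions ⟨A_i, F_i⟩*; the map a/Ω^A F ↦ ⟨a(i)/Ω^{A_i}F_i : i ∈ I⟩ is a well-defined injective homomorphism. -/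
/-- The quotient of an algebra by (the setoid of) a congruence; operations are
computed on arbitrarily chosen representatives. -/
noncomputable def quotAlg {L : Lang} (A : Alg L) (s : Setoid A.carrier) :
    Alg L where
  carrier := Quotient s
  interp f x := Quotient.mk s (A.interp f (fun i => (x i).out))

/-!
The Leibniz congruence of a subdirect product is the product of the Leibniz congruences of the
factors. The coordinatewise relation is a congruence compatible with `F`, hence below `Ω^A F`.
Conversely, the projection of `Ω^A F` to the `i`-th factor is a congruence compatible with `Fᵢ`,
hence below `Ω^{Aᵢ} Fᵢ`: the binary operation of the non-indexed product that takes the `i`-th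
coordinate from its first argument and all others from its second makes the projection
transitive, and, applied with a fixed element of `F` as second argument, compatible with `Fᵢ`.
Hence `a/Ω^A F ↦ ⟨a(i)/Ω^{Aᵢ}Fᵢ⟩` is well defined and injective; the rest is quotient
bookkeeping.
-/

section Congruence

variable {L : Lang} {A : Alg L}

theorem IsCongruence.eval_rel {θ : A.carrier → A.carrier → Prop} (hθ : IsCongruence A θ)
    {V : Type} {v w : V → A.carrier} (h : ∀ k, θ (v k) (w k)) :
    ∀ t : Term L V, θ (t.eval A v) (t.eval A w)
  | .var x => h x
  | .op f ts => hθ.2 _ f _ _ fun j => hθ.eval_rel h (ts j)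

theorem Term.eval_quotAlg (s : Setoid A.carrier) (hs : IsCongruence A s.r) {V : Type}
    (w : V → A.carrier) :
    ∀ t : Term L V, t.eval (quotAlg A s) (fun k => Quotient.mk s (w k)) =
      Quotient.mk s (t.eval A w)
  | .var _ => rfl
  | .op f ts => Quotient.sound <| hs.2 _ f _ _ fun j =>
      Quotient.exact ((Quotient.out_eq _).trans (Term.eval_quotAlg s hs w (ts j)))

end Congruence

section SubdirectProduct

variable {ι : Type} {L : ι → Lang} {A : ∀ i, Alg (L i)}

open Classical in
noncomputable def coordOp (i : ι) {n : ℕ} (t : Term (L i) (Fin n)) (d : Fin n) :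
    (prodLang L).ops n :=
  Function.update (fun _ => .var d) i t

theorem interp_coordOp_self (i : ι) {n : ℕ} (t : Term (L i) (Fin n)) (d : Fin n)
    (x : Fin n → (prodAlg A).carrier) :
    (prodAlg A).interp (coordOp i t d) x i = t.eval (A i) (fun k => x k i) := by
  simp only [prodAlg, coordOp, Function.update_self]

theorem interp_coordOp_of_ne {i j : ι} (hj : j ≠ i) {n : ℕ} (t : Term (L i) (Fin n))
    (d : Fin n) (x : Fin n → (prodAlg A).carrier) :
    (prodAlg A).interp (coordOp i t d) x j = x d j := by
  classical
  simp only [prodAlg, coordOp]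
  rw [Function.update_of_ne hj]
  rfl

variable {S : Set (prodAlg A).carrier} {hS : OpClosed (prodAlg A) S}

noncomputable def splice (i : ι) (a b : (subAlg (prodAlg A) S hS).carrier) :
    (subAlg (prodAlg A) S hS).carrier :=
  (subAlg (prodAlg A) S hS).interp (coordOp i (.var 0) 1) ![a, b]

theorem splice_apply_self (i : ι) (a b : (subAlg (prodAlg A) S hS).carrier) :
    (splice i a b).1 i = a.1 i :=
  interp_coordOp_self i _ _ _

theorem splice_apply_of_ne {i j : ι} (hj : j ≠ i) (a b : (subAlg (prodAlg A) S hS).carrier) :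
    (splice i a b).1 j = b.1 j :=
  interp_coordOp_of_ne hj _ _ _

theorem splice_eq_of_apply_eq {i : ι} {a b : (subAlg (prodAlg A) S hS).carrier}
    (h : a.1 i = b.1 i) : splice i a b = b := by
  refine Subtype.ext (funext fun j => ?_)
  by_cases hj : j = i
  · subst hj
    exact (splice_apply_self j a b).trans h
  · exact splice_apply_of_ne hj a b

theorem IsCongruence.splice {θ : (subAlg (prodAlg A) S hS).carrier →
      (subAlg (prodAlg A) S hS).carrier → Prop}
    (hθ : IsCongruence _ θ) (i : ι) {a b c d : (subAlg (prodAlg A) S hS).carrier}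
    (hac : θ a c) (hbd : θ b d) : θ (splice i a b) (splice i c d) :=
  hθ.2 _ _ _ _ fun k => by fin_cases k <;> assumption

def pointwiseRel (θi : ∀ i, (A i).carrier → (A i).carrier → Prop)
    (a c : (subAlg (prodAlg A) S hS).carrier) : Prop :=
  ∀ i, θi i (a.1 i) (c.1 i)

theorem isCongruence_pointwiseRel {θi : ∀ i, (A i).carrier → (A i).carrier → Prop}
    (hθi : ∀ i, IsCongruence (A i) (θi i)) :
    IsCongruence (subAlg (prodAlg A) S hS) (pointwiseRel θi) :=
  ⟨⟨fun _ i => (hθi i).1.refl _, fun h i => (hθi i).1.symm (h i),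
      fun h₁ h₂ i => (hθi i).1.trans (h₁ i) (h₂ i)⟩,
    fun _ f _ _ h i => (hθi i).eval_rel (fun k => h k i) (f i)⟩

theorem compatible_pointwiseRel {Fi : ∀ i, Set (A i).carrier}
    {θi : ∀ i, (A i).carrier → (A i).carrier → Prop} (hθi : ∀ i, Compatible (A i) (Fi i) (θi i)) :
    Compatible (subAlg (prodAlg A) S hS) {s | ∀ i, s.1 i ∈ Fi i} (pointwiseRel θi) :=
  fun _ _ h ha i => hθi i _ _ (h i) (ha i)

def projRel (θ : (subAlg (prodAlg A) S hS).carrier → (subAlg (prodAlg A) S hS).carrier → Prop)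
    (i : ι) (x y : (A i).carrier) : Prop :=
  ∃ a c, θ a c ∧ a.1 i = x ∧ c.1 i = y

variable {θ : (subAlg (prodAlg A) S hS).carrier → (subAlg (prodAlg A) S hS).carrier → Prop}

theorem isCongruence_projRel (hθ : IsCongruence _ θ) {i : ι}
    (hsurj : Function.Surjective fun s : (subAlg (prodAlg A) S hS).carrier => s.1 i) :
    IsCongruence (A i) (projRel θ i) := by
  refine ⟨⟨fun x => ?_, fun ⟨a, c, h, ha, hc⟩ => ⟨c, a, hθ.1.symm h, hc, ha⟩, ?_⟩, ?_⟩
  · obtain ⟨a, rfl⟩ := hsurj x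
    exact ⟨a, a, hθ.1.refl a, rfl, rfl⟩
  · rintro _ _ _ ⟨a, c, hac, rfl, hc⟩ ⟨c', e, hce, hc', rfl⟩
    have hcc' : splice i c c' = c' := splice_eq_of_apply_eq (hc.trans hc'.symm)
    refine ⟨splice i a c', splice i e c', ?_, splice_apply_self i a c', splice_apply_self i e c'⟩
    have h₁ := hθ.splice i hac (hθ.1.refl c')
    have h₂ := hθ.splice i hce (hθ.1.refl c')
    rw [hcc'] at h₁
    rw [splice_eq_of_apply_eq rfl] at h₂
    exact hθ.1.trans h₁ h₂
  · intro n f x y hxy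
    choose a c hac ha hc using hxy
    obtain ⟨s, -⟩ := hsurj ((A i).interp f x)
    -- an extra argument supplies the coordinates outside `i`, even when `n = 0`
    let P : (prodLang L).ops (n + 1) := coordOp i (.op f fun k => .var k.succ) 0
    refine ⟨(subAlg (prodAlg A) S hS).interp P (Fin.cons s a),
      (subAlg (prodAlg A) S hS).interp P (Fin.cons s c),
      hθ.2 _ P _ _ (Fin.cases (hθ.1.refl s) hac), ?_, ?_⟩ <;>
    · refine (interp_coordOp_self i _ 0 _).trans ?_
      simp only [Term.eval, Fin.cons_succ, ha, hc]

theorem compatible_projRel {Fi : ∀ i, Set (A i).carrier} (hθ : IsCongruence _ θ)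
    (hθF : Compatible (subAlg (prodAlg A) S hS) {s | ∀ i, s.1 i ∈ Fi i} θ)
    (hne : ∃ s : (subAlg (prodAlg A) S hS).carrier, ∀ i, s.1 i ∈ Fi i) (i : ι) :
    Compatible (A i) (Fi i) (projRel θ i) := by
  rintro _ _ ⟨a, c, hac, rfl, rfl⟩ ha
  obtain ⟨s, hs⟩ := hne
  have mem_splice : ∀ b, b.1 i ∈ Fi i → ∀ j, (splice i b s).1 j ∈ Fi j := fun b hb j => by
    by_cases hj : j = i
    · subst hj
      rwa [splice_apply_self]
    · rw [splice_apply_of_ne hj]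
      exact hs j
  have := hθF _ _ (hθ.splice i hac (hθ.1.refl s)) (mem_splice a ha) i
  rwa [splice_apply_self] at this

theorem IsLeibniz.rel_iff_forall_rel {Fi : ∀ i, Set (A i).carrier}
    (hθ : IsLeibniz (subAlg (prodAlg A) S hS) {s | ∀ i, s.1 i ∈ Fi i} θ)
    (hsurj : ∀ i, Function.Surjective fun s : (subAlg (prodAlg A) S hS).carrier => s.1 i)
    {θi : ∀ i, (A i).carrier → (A i).carrier → Prop} (hθi : ∀ i, IsLeibniz (A i) (Fi i) (θi i))
    (hne : ∃ s : (subAlg (prodAlg A) S hS).carrier, ∀ i, s.1 i ∈ Fi i)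
    (a c : (subAlg (prodAlg A) S hS).carrier) :
    θ a c ↔ ∀ i, θi i (a.1 i) (c.1 i) :=
  ⟨fun h i => (hθi i).2.2 _ (isCongruence_projRel hθ.1 (hsurj i))
      (compatible_projRel hθ.1 hθ.2.1 hne i) _ _ ⟨a, c, h, rfl, rfl⟩,
    hθ.2.2 _ (isCongruence_pointwiseRel fun i => (hθi i).1)
      (compatible_pointwiseRel fun i => (hθi i).2.1) a c⟩

end SubdirectProduct

/-- if `⟨A, F⟩` (given by the closed set `S` with surjective
projections and `F` nonempty) is a subdirect product of the matrices
`⟨A i, Fi i⟩`, then the reduction `⟨A, F⟩* = ⟨A/θ, F/θ⟩` (where `θ = Ω^A F`)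
embeds as a subdirect product into the non-indexed product of the reductions
`⟨A i, Fi i⟩*`: the map `a/θ ↦ ⟨a(i)/θᵢ : i ∈ I⟩` is a well-defined injective
homomorphism with surjective projections, which moreover reflects the quotient
filters. -/
theorem reduction_of_subdirect_product_embeds
    {ι : Type} {L : ι → Lang} (A : ∀ i, Alg (L i))
    (Fi : ∀ i, Set (A i).carrier)
    (S : Set (prodAlg A).carrier) (hS : OpClosed (prodAlg A) S)
    (hsurj : ∀ i, Function.Surjective
      (fun s : (subAlg (prodAlg A) S hS).carrier => s.1 i))
    (θ : (subAlg (prodAlg A) S hS).carrier →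
         (subAlg (prodAlg A) S hS).carrier → Prop)
    (hθ : IsLeibniz (subAlg (prodAlg A) S hS)
      {s : (subAlg (prodAlg A) S hS).carrier | ∀ i, s.1 i ∈ Fi i} θ)
    (θi : ∀ i, (A i).carrier → (A i).carrier → Prop)
    (hθi : ∀ i, IsLeibniz (A i) (Fi i) (θi i))
    (hne : ∃ s : (subAlg (prodAlg A) S hS).carrier, ∀ i, s.1 i ∈ Fi i) :
    -- the setoids of the Leibniz congruences
    let sd : Setoid (subAlg (prodAlg A) S hS).carrier := ⟨θ, hθ.1.1⟩
    let si : ∀ i, Setoid (A i).carrier := fun i => ⟨θi i, (hθi i).1.1⟩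
    -- the map on representatives
    let g : (subAlg (prodAlg A) S hS).carrier →
        (prodAlg (fun i => quotAlg (A i) (si i))).carrier :=
      fun a i => Quotient.mk (si i) (a.1 i)
    -- the induced map on the reduction
    let gQ : (quotAlg (subAlg (prodAlg A) S hS) sd).carrier →
        (prodAlg (fun i => quotAlg (A i) (si i))).carrier :=
      fun q => g q.out
    -- well-definedness and injectivity
    (∀ a c : (subAlg (prodAlg A) S hS).carrier, g a = g c ↔ θ a c) ∧
    (∀ a, gQ (Quotient.mk sd a) = g a) ∧
    Function.Injective gQ ∧
    -- homomorphism
    (∀ (n : ℕ) (f : (prodLang L).ops n)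
        (x : Fin n → (quotAlg (subAlg (prodAlg A) S hS) sd).carrier),
      gQ ((quotAlg (subAlg (prodAlg A) S hS) sd).interp f x) =
        (prodAlg (fun i => quotAlg (A i) (si i))).interp f (fun k => gQ (x k))) ∧
    -- the image is a subdirect product of the reductions
    (∀ i, Function.Surjective (fun q => gQ q i)) ∧
    -- the embedding identifies the quotient filter with the product of the
    -- quotient filters
    (∀ q, (∀ i, gQ q i ∈ Quotient.mk (si i) '' Fi i) ↔
      ∃ a : (subAlg (prodAlg A) S hS).carrier,
        Quotient.mk sd a = q ∧ ∀ i, a.1 i ∈ Fi i) := by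
  intro sd si g gQ
  have hg : ∀ a c, g a = g c ↔ θ a c := fun a c => by
    rw [hθ.rel_iff_forall_rel hsurj hθi hne]
    exact ⟨fun h i => Quotient.exact (congrFun h i), fun h => funext fun i => Quotient.sound (h i)⟩
  have hgQ : ∀ a, gQ (Quotient.mk sd a) = g a := fun a =>
    (hg _ _).2 (Quotient.exact (Quotient.out_eq (Quotient.mk sd a)))
  refine ⟨hg, hgQ, fun q r h => ?_, fun n f x => ?_, fun i y => ?_, fun q => ?_⟩
  · rw [← Quotient.out_eq q, ← Quotient.out_eq r]
    exact Quotient.sound ((hg _ _).1 h)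
  · exact (hgQ _).trans (funext fun i => (Term.eval_quotAlg (si i) (hθi i).1 _ (f i)).symm)
  · obtain ⟨a, ha⟩ := hsurj i y.out
    refine ⟨Quotient.mk sd a, ?_⟩
    simp only [hgQ, g, ha]
    exact Quotient.out_eq y
  · constructor
    · intro h
      refine ⟨q.out, Quotient.out_eq q, fun i => ?_⟩
      obtain ⟨b, hb, hbq⟩ := h i
      exact (hθi i).2.1 _ _ (Quotient.exact hbq) hb
    · rintro ⟨a, rfl, ha⟩ i
      rw [hgQ]
      exact ⟨a.1 i, ha i, rfl⟩
end

section
/- Let κ be a cardinal with κ ≥ |I|, let F be a κ⁺-complete filter on a set J, and consider matrices ⟨B_i^j, G_i^j⟩ for i ∈ I, j ∈ J. The map g from the reduced product over F of the non-indexed I-products to the non-indexed I-product of the reduced products over F, defined by g(a/F)(i) := ⟨a(j)(i) : j ∈ J⟩/F, is a well-defined isomorphism; in particular it is injective because the intersection over i ∈ I of the sets {j ∈ J : a(j)(i) = c(j)(i)} belongs to F whenever each such set does. -/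
/-- The direct product of a family of algebras of the same language. -/
def directProd {L : Lang} {J : Type} (B : J → Alg L) : Alg L where
  carrier := ∀ j, (B j).carrier
  interp f x j := (B j).interp f (fun k => x k j)

/-- The reduced-product setoid induced by a filter `F` on the index set `J`:
two `J`-tuples are identified when they agree on a set belonging to `F`. -/
def rpSetoid {J : Type} (F : Filter J) {α : J → Type} : Setoid (∀ j, α j) where
  r a b := {j | a j = b j} ∈ F
  iseqv := by
    refine ⟨fun a => ?_, fun {a b} h => ?_, fun {a b c} h₁ h₂ => ?_⟩
    · exact Filter.mem_of_superset Filter.univ_mem (by intro j _; rfl)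
    · exact Filter.mem_of_superset h (fun j hj => (hj : _ = _).symm)
    · exact Filter.mem_of_superset (Filter.inter_mem h₁ h₂)
        (fun j hj => (hj.1 : _ = _).trans hj.2)

/-- Evaluation of a term in a quotient algebra by a congruence, at a tuple of
classes, is the class of the evaluation at representatives. -/
lemma eval_quot {L : Lang} (A : Alg L) (s : Setoid A.carrier)
    (hcong : ∀ (n : ℕ) (f : L.ops n) (x y : Fin n → A.carrier),
      (∀ i, s.r (x i) (y i)) → s.r (A.interp f x) (A.interp f y))
    {V : Type} (w : V → A.carrier) (t : Term L V) :
    Term.eval (quotAlg A s) (fun k => Quotient.mk s (w k)) t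
      = Quotient.mk s (Term.eval A w t) := by
  induction t with
  | var x => rfl
  | op f ts ih =>
      show Quotient.mk s (A.interp f fun i =>
        (Term.eval (quotAlg A s) (fun k => Quotient.mk s (w k)) (ts i)).out) = _
      simp only [ih]
      exact Quotient.sound (hcong _ f _ _ fun i =>
        Quotient.exact (Quotient.out_eq _))

/-- Term evaluation in a direct product is computed coordinatewise. -/
lemma eval_directProd {L : Lang} {J : Type} (B : J → Alg L) {V : Type}
    (w : V → ∀ j, (B j).carrier) (t : Term L V) (j : J) :
    Term.eval (directProd B) w t j = Term.eval (B j) (fun k => w k j) t := by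
  induction t with
  | var x => rfl
  | op f ts ih =>
      show (B j).interp f (fun k => Term.eval (directProd B) w (ts k) j) = _
      simp only [ih]
      rfl

/-- The reduced-product setoid is a congruence of the direct product. -/
lemma rpCong {L : Lang} {J : Type} (F : Filter J) (B : J → Alg L)
    (n : ℕ) (f : L.ops n) (x y : Fin n → (directProd B).carrier)
    (h : ∀ i, (rpSetoid F (α := fun j => (B j).carrier)).r (x i) (y i)) :
    (rpSetoid F (α := fun j => (B j).carrier)).r
      ((directProd B).interp f x) ((directProd B).interp f y) := by
  have hmem : ⋂ i, {j | x i j = y i j} ∈ F := Filter.iInter_mem.mpr h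
  refine Filter.mem_of_superset hmem fun j hj => ?_
  have hj' : ∀ i, x i j = y i j := fun i => Set.mem_iInter.mp hj i
  show (B j).interp f (fun k => x k j) = (B j).interp f (fun k => y k j)
  exact congrArg _ (funext fun k => hj' k)

/-- for a `κ⁺`-complete filter `F` on `J` with `κ ≥ |I|`, the map
`g(a/F)(i) := ⟨a(j)(i) : j ∈ J⟩/F` is a well-defined isomorphism from the
reduced product over `F` of the non-indexed `I`-products of the matrices
`⟨B i j, G i j⟩` onto the non-indexed `I`-product of the reduced products over
`F`; in particular it is injective because an intersection of at most `κ` many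
filter sets is a filter set. -/
theorem reduced_product_of_nonindexed_iso
    {I J : Type} (κ : Cardinal) (hI : Cardinal.mk I ≤ κ)
    (F : Filter J)
    (hcomp : ∀ s : Set (Set J), Cardinal.mk s ≤ κ → (∀ t ∈ s, t ∈ F) →
      ⋂₀ s ∈ F)
    {L : I → Lang} (B : ∀ i, J → Alg (L i))
    (G : ∀ i j, Set (B i j).carrier) :
    let D := directProd (fun j => prodAlg (fun i => B i j))
    let QD := quotAlg D (rpSetoid F)
    let C := prodAlg (fun i => quotAlg (directProd (fun j => B i j)) (rpSetoid F))
    -- the map on representatives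
    let g : D.carrier → C.carrier :=
      fun a i => Quotient.mk (rpSetoid F) (fun j => a j i)
    -- the induced map on the reduced product
    let gQ : QD.carrier → C.carrier := fun q => g q.out
    -- `g` descends to the quotient (well-definedness) …
    (∀ a b : D.carrier, (rpSetoid F).r a b → g a = g b) ∧
    -- … injectively …
    (∀ a b : D.carrier, g a = g b → (rpSetoid F).r a b) ∧
    -- … because the relevant intersection of filter sets is a filter set:
    (∀ a b : D.carrier, (∀ i, {j | a j i = b j i} ∈ F) → {j | a j = b j} ∈ F) ∧
    (∀ a, gQ (Quotient.mk (rpSetoid F) a) = g a) ∧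
    -- `gQ` is an isomorphism of matrices:
    Function.Bijective gQ ∧
    (∀ (n : ℕ) (f : (prodLang L).ops n) (x : Fin n → QD.carrier),
      gQ (QD.interp f x) = C.interp f (fun k => gQ (x k))) ∧
    (∀ q : QD.carrier,
      {j | ∀ i, q.out j i ∈ G i j} ∈ F ↔
        ∀ i, {j | (gQ q i).out j ∈ G i j} ∈ F) := by
  intro D QD C g gQ
  -- intersections of `I`-indexed families of filter sets are filter sets
  have hInt : ∀ (V : I → Set J), (∀ i, V i ∈ F) → ⋂ i, V i ∈ F := by
    intro V hV
    have := hcomp (Set.range V) (le_trans Cardinal.mk_range_le hI)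
      (by rintro t ⟨i, rfl⟩; exact hV i)
    rwa [Set.sInter_range] at this
  have key : ∀ a b : D.carrier, (∀ i, {j | a j i = b j i} ∈ F) →
      {j | a j = b j} ∈ F := by
    intro a b h
    refine Filter.mem_of_superset (hInt (fun i => {j | a j i = b j i}) h) ?_
    intro j hj
    exact funext fun i => Set.mem_iInter.mp hj i
  have wd : ∀ a b : D.carrier, (rpSetoid F).r a b → g a = g b := by
    intro a b h
    funext i
    exact Quotient.sound (Filter.mem_of_superset h fun j hj =>
      congrFun (hj : a j = b j) i)
  have inj : ∀ a b : D.carrier, g a = g b → (rpSetoid F).r a b := by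
    intro a b h
    exact key a b fun i => Quotient.exact (congrFun h i)
  have gQmk : ∀ a, gQ (Quotient.mk (rpSetoid F) a) = g a := fun a =>
    wd _ _ (Quotient.exact (Quotient.out_eq _))
  refine ⟨wd, inj, key, gQmk, ⟨?_, ?_⟩, ?_, ?_⟩
  · -- injective
    intro q₁ q₂ h
    have := inj _ _ h
    rw [← Quotient.out_eq (s := rpSetoid F) q₁, ← Quotient.out_eq (s := rpSetoid F) q₂]
    exact Quotient.sound this
  · -- surjective
    intro c
    refine ⟨Quotient.mk (rpSetoid F) (fun j i => (c i).out j), ?_⟩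
    refine (gQmk _).trans ?_
    funext i
    show Quotient.mk (rpSetoid F) (fun j => (c i).out j) = c i
    exact Quotient.out_eq _
  · -- homomorphism
    intro n f x
    have h1 : QD.interp f x
        = Quotient.mk (rpSetoid F) (D.interp f (fun k => (x k).out)) := rfl
    rw [h1]
    refine (gQmk _).trans ?_
    funext i
    have h2 : ∀ k, gQ (x k) i
        = Quotient.mk (rpSetoid F) (fun j => (x k).out j i) := fun k => rfl
    show Quotient.mk (rpSetoid F) (fun j => D.interp f (fun k => (x k).out) j i)
      = Term.eval (quotAlg (directProd (fun j => B i j)) (rpSetoid F))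
          (fun k => gQ (x k) i) (f i)
    simp only [h2]
    refine Eq.trans ?_ (eval_quot _ _ (rpCong F (fun j => B i j)) (fun k j => (x k).out j i) (f i)).symm
    refine congrArg _ (funext fun j => ?_)
    show Term.eval (B i j) (fun k => (x k).out j i) (f i)
      = Term.eval (directProd (fun j => B i j)) (fun k j => (x k).out j i) (f i) j
    rw [eval_directProd]
  · -- preservation of the designated sets
    intro q
    have hT : ∀ i, {j | (gQ q i).out j = q.out j i} ∈ F := by
      intro i
      have : (rpSetoid F).r (Quotient.mk (rpSetoid F) (fun j => q.out j i)).out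
          (fun j => q.out j i) := Quotient.exact (Quotient.out_eq _)
      exact this
    constructor
    · intro hS i
      refine Filter.mem_of_superset (Filter.inter_mem hS (hT i)) ?_
      rintro j ⟨hj1, hj2⟩
      show (gQ q i).out j ∈ G i j
      rw [show (gQ q i).out j = q.out j i from hj2]
      exact hj1 i
    · intro hU
      have hV : ∀ i, {j | q.out j i ∈ G i j} ∈ F := by
        intro i
        refine Filter.mem_of_superset (Filter.inter_mem (hU i) (hT i)) ?_
        rintro j ⟨hj1, hj2⟩
        show q.out j i ∈ G i j
        rw [← (hj2 : (gQ q i).out j = q.out j i)]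
        exact hj1
      refine Filter.mem_of_superset (hInt _ hV) fun j hj => ?_
      exact fun i => Set.mem_iInter.mp hj i
end

section
/- Let ⊢ be a logic with theorems induced by a class K of matrices (i.e., Γ ⊢ φ iff every homomorphism into a member of K mapping Γ into the filter maps φ into the filter). Then every algebra A such that ⟨A, F⟩ is a model of ⊢ with Suszko congruence the identity satisfies all equations valid in the class of algebra reducts of K; in particular these algebras belong to the variety generated by the algebra reducts of K. -/
/-- `F` is a deductive filter of the consequence relation `C` (on formulas
`Term L V`) on the algebra `A`. -/
def DedFilter {L : Lang} {V : Type} (C : Set (Term L V) → Term L V → Prop)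
    (A : Alg L) (F : Set A.carrier) : Prop :=
  ∀ (Γ : Set (Term L V)) (φ : Term L V), C Γ φ →
    ∀ v : V → A.carrier,
      (∀ γ ∈ Γ, Term.eval A v γ ∈ F) → Term.eval A v φ ∈ F

/-- `x` and `y` are related by the Leibniz congruence of `G` on `A`: some
congruence compatible with `G` relates them. -/
def LeibnizRel {L : Lang} (A : Alg L) (G : Set A.carrier)
    (x y : A.carrier) : Prop :=
  ∃ θ, IsCongruence A θ ∧ Compatible A G θ ∧ θ x y

/-- The Suszko congruence of `F` relative to `C` — the intersection of the
Leibniz congruences of all deductive filters of `C` extending `F` — is the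
identity relation. -/
def SuszkoId {L : Lang} {V : Type} (C : Set (Term L V) → Term L V → Prop)
    (A : Alg L) (F : Set A.carrier) : Prop :=
  ∀ x y : A.carrier,
    (∀ G : Set A.carrier, DedFilter C A G → F ⊆ G → LeibnizRel A G x y) →
    x = y

/-- The consequence relation induced by the (indexed) class of matrices
`⟨B k, G k⟩` on the formulas `Term L V`. -/
def MatCons {L : Lang} {V : Type} {ι : Type} (B : ι → Alg L)
    (G : ∀ k, Set (B k).carrier) (Γ : Set (Term L V)) (φ : Term L V) : Prop :=
  ∀ (k : ι) (v : V → (B k).carrier),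
    (∀ γ ∈ Γ, Term.eval (B k) v γ ∈ G k) → Term.eval (B k) v φ ∈ G k

/-
Let `G'` be any deductive filter on `A` extending `F`. Call `a, b` indistinguishable
if no unary polynomial of `A` separates them modulo `G'`; this is a congruence compatible with
`G'`. If `t ≈ s` holds in every `B k`, then for each polynomial `p` the formulas `p(t)` and `p(s)`
are interderivable in the logic of the matrices, so `G'` contains `p(t(w))` exactly when it
contains `p(s(w))`. Hence `t(w)` and `s(w)` are related by the Leibniz congruence of every such
`G'`, and the Suszko congruence being the identity gives `t(w) = s(w)`.
-/

namespace Term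

variable {L : Lang}

def subst {V W : Type} (σ : V → Term L W) : Term L V → Term L W
  | .var x => σ x
  | .op f ts => .op f fun i => subst σ (ts i)

theorem eval_subst {V W : Type} (A : Alg L) (σ : V → Term L W) (v : W → A.carrier) :
    ∀ t : Term L V, eval A v (t.subst σ) = eval A (fun x => eval A v (σ x)) t
  | .var _ => rfl
  | .op f ts => by
      simp only [subst, eval]
      exact congrArg _ (funext fun i => eval_subst A σ v (ts i))

def vars {V : Type} : Term L V → Set V
  | .var x => {x}
  | .op _ ts => ⋃ i, vars (ts i)

theorem finite_vars {V : Type} : ∀ t : Term L V, t.vars.Finite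
  | .var x => Set.finite_singleton x
  | .op _ ts => Set.finite_iUnion fun i => finite_vars (ts i)

theorem eval_congr {V : Type} (A : Alg L) {v v' : V → A.carrier} :
    ∀ t : Term L V, Set.EqOn v v' t.vars → eval A v t = eval A v' t
  | .var x, h => h rfl
  | .op f ts, h => by
      simp only [eval]
      exact congrArg _ (funext fun i =>
        eval_congr A (ts i) (h.mono (Set.subset_iUnion (fun j => vars (ts j)) i)))

/-- A term over `Option A` is a unary polynomial of `A`: `none` is its argument and `some c`
stands for the parameter `c`. -/
def evalPoly (A : Alg L) (q : Term L (Option A.carrier)) (a : A.carrier) : A.carrier :=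
  eval A (fun o => o.elim a id) q

end Term

theorem exists_injOn_of_countable {X V : Type*} [Infinite V] {S : Set X} (hS : S.Countable) :
    ∃ r : X → V, Set.InjOn r S := by
  obtain ⟨f, hf⟩ := Set.countable_iff_exists_injOn.mp hS
  exact ⟨Infinite.natEmbedding V ∘ f, (Infinite.natEmbedding V).injective.comp_injOn hf⟩

theorem Set.InjOn.exists_comp_eqOn {X V α : Type*} [Nonempty α] {r : X → V} {S : Set X}
    (hr : Set.InjOn r S) (u : X → α) : ∃ u' : V → α, Set.EqOn (u' ∘ r) u S :=
  ⟨Function.extend (S.domRestrict r) (S.domRestrict u) fun _ => Classical.arbitrary α,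
    fun x hx => hr.injective.extend_apply _ _ ⟨x, hx⟩⟩

theorem rel_apply_of_forall_update {ι α β : Type*} [Fintype ι] [DecidableEq ι]
    {r : α → α → Prop} {s : β → β → Prop} (hrefl : ∀ b, s b b)
    (htrans : ∀ {a b c}, s a b → s b c → s a c)
    (g : (ι → α) → β)
    (hg : ∀ c i a b, r a b → s (g (Function.update c i a)) (g (Function.update c i b)))
    {x y : ι → α} (hxy : ∀ i, r (x i) (y i)) : s (g x) (g y) := by
  let z : Finset ι → ι → α := fun S i => if i ∈ S then y i else x i
  suffices h : ∀ S, s (g x) (g (z S)) by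
    simpa [z] using h Finset.univ
  intro S
  induction S using Finset.induction_on with
  | empty => simpa [z] using hrefl (g x)
  | insert j S hj ih =>
    have hold : Function.update (z S) j (x j) = z S := by
      simp [z, hj]
    have hnew : Function.update (z S) j (y j) = z (insert j S) := by
      funext i
      by_cases hi : i = j
      · subst hi; simp [z]
      · simp [z, hi]
    have step := hg (z S) j (x j) (y j) (hxy j)
    rw [hold, hnew] at step
    exact htrans ih step

theorem matCons_singleton_of_forall_eval_eq {L : Lang} {X ι : Type} {B : ι → Alg L}
    {G : ∀ k, Set (B k).carrier} {φ ψ : Term L X}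
    (h : ∀ k v, Term.eval (B k) v φ = Term.eval (B k) v ψ) : MatCons B G {φ} ψ :=
  fun k v hv => h k v ▸ hv φ rfl

/-- The countably many variables of the rule are renamed injectively into `V`. -/
theorem DedFilter.eval_mem_of_matCons {L : Lang} {V X ι : Type} [Infinite V]
    {B : ι → Alg L} {G : ∀ k, Set (B k).carrier} {A : Alg L} {F : Set A.carrier}
    (hF : DedFilter (MatCons B G (V := V)) A F) {Γ : Set (Term L X)} (hΓ : Γ.Countable)
    {φ : Term L X} (hΓφ : MatCons B G Γ φ) (u : X → A.carrier)
    (hu : ∀ γ ∈ Γ, Term.eval A u γ ∈ F) : Term.eval A u φ ∈ F := by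
  set S := φ.vars ∪ ⋃ γ ∈ Γ, γ.vars
  have hS : S.Countable :=
    φ.finite_vars.countable.union (hΓ.biUnion fun γ _ => γ.finite_vars.countable)
  obtain ⟨r, hr⟩ := exists_injOn_of_countable (V := V) hS
  have : Nonempty A.carrier := ⟨Term.eval A u φ⟩
  obtain ⟨u', hu'⟩ := hr.exists_comp_eqOn u
  have hrename (t : Term L X) (ht : t.vars ⊆ S) :
      Term.eval A u' (t.subst (Term.var ∘ r)) = Term.eval A u t := by
    rw [Term.eval_subst]
    exact Term.eval_congr A t (hu'.mono ht)
  have hrenamed : MatCons B G (Term.subst (Term.var ∘ r) '' Γ) (φ.subst (Term.var ∘ r)) := by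
    intro k v hv
    rw [Term.eval_subst]
    refine hΓφ k (v ∘ r) fun γ hγ => ?_
    have := hv _ ⟨γ, hγ, rfl⟩
    rw [Term.eval_subst] at this
    exact this
  rw [← hrename φ Set.subset_union_left]
  refine hF _ _ hrenamed u' ?_
  rintro _ ⟨γ, hγ, rfl⟩
  rw [hrename γ (Set.subset_union_right.trans' (Set.subset_biUnion_of_mem hγ))]
  exact hu γ hγ

section PolyRel

variable {L : Lang}

def PolyRel (A : Alg L) (F : Set A.carrier) (a b : A.carrier) : Prop :=
  ∀ q : Term L (Option A.carrier), q.evalPoly A a ∈ F ↔ q.evalPoly A b ∈ F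

theorem PolyRel.equivalence (A : Alg L) (F : Set A.carrier) : Equivalence (PolyRel A F) where
  refl _ _ := Iff.rfl
  symm h q := (h q).symm
  trans h h' q := (h q).trans (h' q)

theorem PolyRel.compatible (A : Alg L) (F : Set A.carrier) : Compatible A F (PolyRel A F) :=
  fun _ _ h => (h (.var none)).mp

theorem PolyRel.interp_update {A : Alg L} {F : Set A.carrier} {a b : A.carrier}
    (h : PolyRel A F a b) {n : ℕ} (f : L.ops n) (c : Fin n → A.carrier) (i : Fin n) :
    PolyRel A F (A.interp f (Function.update c i a)) (A.interp f (Function.update c i b)) := by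
  intro q
  let σ : Option A.carrier → Term L (Option A.carrier) := fun o =>
    o.elim (.op f fun j => if j = i then .var none else .var (some (c j))) (.var ∘ some)
  have hσ (d : A.carrier) :
      (q.subst σ).evalPoly A d = q.evalPoly A (A.interp f (Function.update c i d)) := by
    rw [Term.evalPoly, Term.eval_subst]
    congr 1
    funext o
    cases o with
    | none =>
      simp only [σ, Option.elim, Term.eval]
      congr 1
      funext j
      by_cases hj : j = i
      · subst hj; simp [Term.eval]
      · simp [hj, Term.eval]
    | some _ => rfl
  rw [← hσ, ← hσ]
  exact h _

theorem PolyRel.isCongruence (A : Alg L) (F : Set A.carrier) : IsCongruence A (PolyRel A F) :=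
  ⟨PolyRel.equivalence A F, fun _ f _ _ hxy =>
    rel_apply_of_forall_update (PolyRel.equivalence A F).refl
      (PolyRel.equivalence A F).trans (A.interp f)
      (fun c i _ _ h => h.interp_update f c i) hxy⟩

theorem polyRel_eval_of_forall_eval_eq {V W ι : Type} [Infinite V] {B : ι → Alg L}
    {G : ∀ k, Set (B k).carrier} {A : Alg L} {F : Set A.carrier}
    (hF : DedFilter (MatCons B G (V := V)) A F) {t s : Term L W}
    (hts : ∀ k w, Term.eval (B k) w t = Term.eval (B k) w s) (w : W → A.carrier) :
    PolyRel A F (Term.eval A w t) (Term.eval A w s) := by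
  intro q
  -- `q` applied to `p(w)` is the value of one formula over the variables `A ⊕ W`
  let plug : Term L W → Term L (A.carrier ⊕ W) := fun p =>
    q.subst fun o => o.elim (p.subst (.var ∘ Sum.inr)) (.var ∘ Sum.inl)
  have hplug (C : Alg L) (v : A.carrier ⊕ W → C.carrier) (p : Term L W) :
      Term.eval C v (plug p) =
        Term.eval C (fun o => o.elim (Term.eval C (v ∘ Sum.inr) p) (v ∘ Sum.inl)) q := by
    simp only [plug, Term.eval_subst]
    congr 1
    funext o
    cases o with
    | none => exact Term.eval_subst C _ v p
    | some _ => rfl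
  have hA (p : Term L W) :
      Term.eval A (Sum.elim id w) (plug p) = q.evalPoly A (Term.eval A w p) := hplug A _ p
  have hB : ∀ k v, Term.eval (B k) v (plug t) = Term.eval (B k) v (plug s) := by
    intro k v
    rw [hplug, hplug, hts]
  rw [← hA, ← hA]
  exact ⟨fun h => hF.eval_mem_of_matCons (Set.countable_singleton _)
      (matCons_singleton_of_forall_eval_eq hB) _ (by simpa using h),
    fun h => hF.eval_mem_of_matCons (Set.countable_singleton _)
      (matCons_singleton_of_forall_eval_eq fun k v => (hB k v).symm) _ (by simpa using h)⟩

end PolyRel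

theorem suszko_reduced_models_satisfy_equations_general
    {L : Lang} {V : Type} [Infinite V] {ι : Type}
    (B : ι → Alg L) (G : ∀ k, Set (B k).carrier)
    (A : Alg L) (F : Set A.carrier)
    (hsz : SuszkoId (MatCons B G (V := V)) A F) :
    ∀ (W : Type) (t s : Term L W),
      (∀ (k : ι) (w : W → (B k).carrier),
        Term.eval (B k) w t = Term.eval (B k) w s) →
      ∀ w : W → A.carrier, Term.eval A w t = Term.eval A w s := by
  intro W t s hts w
  refine hsz _ _ fun G' hG' _ => ⟨PolyRel A G', PolyRel.isCongruence A G',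
    PolyRel.compatible A G', polyRel_eval_of_forall_eval_eq hG' hts w⟩

/-- let `⊢` be a logic with theorems induced by a class of
matrices `⟨B k, G k⟩`.  If `⟨A, F⟩` is a model of `⊢` whose Suszko congruence
is the identity, then `A` satisfies every equation valid in the algebraic
reducts of the matrices of the class; in particular, `A` belongs to the
variety generated by these algebraic reducts. -/
theorem suszko_reduced_models_satisfy_equations
    {L : Lang} {V : Type} [Infinite V] {ι : Type}
    (B : ι → Alg L) (G : ∀ k, Set (B k).carrier)
    (hthm : ∃ φ : Term L V, MatCons B G (∅ : Set (Term L V)) φ)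
    (A : Alg L) (F : Set A.carrier)
    (hmod : DedFilter (MatCons B G (V := V)) A F)
    (hsz : SuszkoId (MatCons B G (V := V)) A F) :
    ∀ (W : Type) (t s : Term L W),
      (∀ (k : ι) (w : W → (B k).carrier),
        Term.eval (B k) w t = Term.eval (B k) w s) →
      ∀ w : W → A.carrier, Term.eval A w t = Term.eval A w s :=
  suszko_reduced_models_satisfy_equations_general B G A F hsz
end

section
/- The negation fragment of classical propositional logic (the consequence relation on formulas built from variables using only ¬, determined by the two-element matrix ⟨{0,1}, ¬, {1}⟩) is axiomatized by the rules: {x, ¬x} ⊢ y; {x} ⊢ ¬¬x; {¬¬x} ⊢ x. That is, the smallest substitution-invariant consequence relation containing these rules coincides with the consequence relation of the matrix ⟨{0,1}, {1}⟩. -/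
/-- Formulas built from countably many variables using only negation. -/
inductive NF : Type
  | var : ℕ → NF
  | neg : NF → NF

/-- Substitution of formulas for variables. -/
def NF.subst (σ : ℕ → NF) : NF → NF
  | .var n => σ n
  | .neg φ => .neg (NF.subst σ φ)

/-- Evaluation in the two-element matrix `⟨{0,1}, ¬, {1}⟩` (with `true` the
designated value). -/
def NF.evalB (v : ℕ → Bool) : NF → Bool
  | .var n => v n
  | .neg φ => !(NF.evalB v φ)

/-- The consequence relation of the matrix `⟨{0,1}, {1}⟩`: the negation
fragment of classical propositional logic. -/
def NFSem (Γ : Set NF) (φ : NF) : Prop :=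
  ∀ v : ℕ → Bool, (∀ γ ∈ Γ, NF.evalB v γ = true) → NF.evalB v φ = true

/-- `C` is a substitution-invariant consequence relation: reflexive, monotone,
closed under cut, and closed under uniform substitution. -/
def IsConsRel (C : Set NF → NF → Prop) : Prop :=
  (∀ Γ φ, φ ∈ Γ → C Γ φ) ∧
  (∀ Γ Δ φ, Γ ⊆ Δ → C Γ φ → C Δ φ) ∧
  (∀ Γ Δ φ, C Δ φ → (∀ δ ∈ Δ, C Γ δ) → C Γ φ) ∧
  (∀ Γ φ (σ : ℕ → NF), C Γ φ → C (NF.subst σ '' Γ) (NF.subst σ φ))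

/-- `C` contains the rules `{x, ¬x} ⊢ y`, `{x} ⊢ ¬¬x`, `{¬¬x} ⊢ x`
(schematically, i.e. all their substitution instances). -/
def HasNegRules (C : Set NF → NF → Prop) : Prop :=
  (∀ φ ψ, C {φ, .neg φ} ψ) ∧
  (∀ φ, C {φ} (.neg (.neg φ))) ∧
  (∀ φ, C {.neg (.neg φ)} φ)

/-!
Every formula is `¬ⁿ x` for a variable `x`, and the double-negation rules make it interderivable
with the literal `x` or `¬x` according to the parity of `n`. So a set of premises either contains
formulas reducing to both `x` and `¬x`, and then derives everything by the first rule, or it is a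
consistent set of literals. In the latter case a conclusion whose literal is not among the premises
is refuted by a valuation making every premise true and that literal false.
-/

namespace NF

def parity : NF → Bool
  | .var _ => false
  | .neg φ => !φ.parity

def base : NF → ℕ
  | .var n => n
  | .neg φ => φ.base

def lit (n : ℕ) : Bool → NF
  | false => .var n
  | true => .neg (.var n)

theorem evalB_eq_xor (v : ℕ → Bool) : ∀ φ : NF, φ.evalB v = xor (v φ.base) φ.parity
  | .var _ => (Bool.xor_false _).symm
  | .neg φ => by rw [evalB, evalB_eq_xor v φ, parity, base, Bool.xor_not]

theorem evalB_subst (v : ℕ → Bool) (σ : ℕ → NF) :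
    ∀ φ : NF, (φ.subst σ).evalB v = φ.evalB (fun n => (σ n).evalB v)
  | .var _ => rfl
  | .neg φ => by rw [subst, evalB, evalB_subst v σ φ, evalB]

end NF

open NF

theorem isConsRel_nfSem : IsConsRel NFSem := by
  refine ⟨fun Γ φ hφ v hv => hv φ hφ, fun Γ Δ φ hΓΔ h v hv => h v fun γ hγ => hv γ (hΓΔ hγ),
    fun Γ Δ φ h hΔ v hv => h v fun δ hδ => hΔ δ hδ v hv, fun Γ φ σ h v hv => ?_⟩
  rw [evalB_subst]
  exact h _ fun γ hγ => (evalB_subst v σ γ).symm.trans (hv _ ⟨γ, hγ, rfl⟩)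

theorem hasNegRules_nfSem : HasNegRules NFSem := by
  refine ⟨fun φ ψ v hv => ?_, fun φ v hv => ?_, fun φ v hv => ?_⟩
  · have hφ := hv φ (by simp)
    have hnφ := hv (.neg φ) (by simp)
    simp [evalB, hφ] at hnφ
  · simpa [evalB] using hv φ rfl
  · simpa [evalB] using hv (.neg (.neg φ)) rfl

/-- The countermodel gives each variable of `Γ` the value its formulas require, and every other
variable the value falsifying `φ`. -/
theorem not_nfSem_of_consistent {Γ : Set NF} {φ : NF}
    (hcons : ∀ γ ∈ Γ, ∀ δ ∈ Γ, γ.base = δ.base → γ.parity = δ.parity)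
    (hφ : ∀ γ ∈ Γ, γ.base = φ.base → γ.parity ≠ φ.parity) : ¬ NFSem Γ φ := by
  classical
  intro h
  let v : ℕ → Bool := fun n =>
    if ∃ γ ∈ Γ, γ.base = n ∧ γ.parity = φ.parity then !φ.parity else φ.parity
  have hv : ∀ γ ∈ Γ, γ.evalB v = true := by
    intro γ hγ
    rw [evalB_eq_xor]
    by_cases hp : γ.parity = φ.parity
    · have hyes : ∃ δ ∈ Γ, δ.base = γ.base ∧ δ.parity = φ.parity := ⟨γ, hγ, rfl, hp⟩
      simp [v, if_pos hyes, hp]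
    · have hno : ¬ ∃ δ ∈ Γ, δ.base = γ.base ∧ δ.parity = φ.parity :=
        fun ⟨δ, hδ, hb, hδp⟩ => hp (hcons γ hγ δ hδ hb.symm ▸ hδp)
      simp [v, if_neg hno, Bool.eq_not_of_ne hp]
  have hvφ : v φ.base = φ.parity :=
    if_neg fun ⟨γ, hγ, hb, hp⟩ => hφ γ hγ hb hp
  simpa [evalB_eq_xor, hvφ] using h v hv

namespace IsConsRel

variable {C : Set NF → NF → Prop} {Γ : Set NF} {a b φ : NF}

theorem of_mem (hC : IsConsRel C) (h : φ ∈ Γ) : C Γ φ :=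
  hC.1 Γ φ h

theorem cut_singleton (hC : IsConsRel C) (h : C {a} φ) (ha : C Γ a) : C Γ φ :=
  hC.2.2.1 Γ {a} φ h fun _ hδ => hδ ▸ ha

theorem cut_pair (hC : IsConsRel C) (h : C {a, b} φ) (ha : C Γ a) (hb : C Γ b) : C Γ φ :=
  hC.2.2.1 Γ {a, b} φ h fun _ hδ => hδ.elim (· ▸ ha) fun hδ => hδ ▸ hb

end IsConsRel

namespace HasNegRules

variable {C : Set NF → NF → Prop} (hC : IsConsRel C) (hR : HasNegRules C)
include hC hR

theorem derives_lit_and_back :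
    ∀ φ : NF, C {φ} (lit φ.base φ.parity) ∧ C {lit φ.base φ.parity} φ
  | .var _ => ⟨hC.of_mem rfl, hC.of_mem rfl⟩
  | .neg (.var _) => ⟨hC.of_mem rfl, hC.of_mem rfl⟩
  | .neg (.neg φ) => by
      obtain ⟨hto, hfrom⟩ := derives_lit_and_back φ
      simp only [base, parity, Bool.not_not]
      exact ⟨hC.cut_singleton hto (hR.2.2 φ), hC.cut_singleton (hR.2.1 φ) hfrom⟩

theorem derives_of_base_eq {γ ψ : NF} (hb : γ.base = ψ.base) (hp : γ.parity = ψ.parity) :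
    C {γ} ψ := by
  have hto := (derives_lit_and_back hC hR γ).1
  rw [hb, hp] at hto
  exact hC.cut_singleton (derives_lit_and_back hC hR ψ).2 hto

theorem derives_of_nfSem {Γ : Set NF} {φ : NF} (h : NFSem Γ φ) : C Γ φ := by
  by_cases hinc : ∃ γ ∈ Γ, ∃ δ ∈ Γ, γ.base = δ.base ∧ γ.parity ≠ δ.parity
  · obtain ⟨γ, hγ, δ, hδ, hb, hp⟩ := hinc
    have hnγ : C {δ} (.neg γ) :=
      derives_of_base_eq hC hR hb.symm (Bool.eq_not_of_ne (Ne.symm hp))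
    exact hC.cut_pair (hR.1 γ φ) (hC.of_mem hγ) (hC.cut_singleton hnγ (hC.of_mem hδ))
  by_cases hlit : ∃ γ ∈ Γ, γ.base = φ.base ∧ γ.parity = φ.parity
  · obtain ⟨γ, hγ, hb, hp⟩ := hlit
    exact hC.cut_singleton (derives_of_base_eq hC hR hb hp) (hC.of_mem hγ)
  push Not at hinc hlit
  exact absurd h (not_nfSem_of_consistent hinc hlit)

end HasNegRules

/-- the negation fragment of classical propositional logic is
axiomatized by `{x, ¬x} ⊢ y`, `{x} ⊢ ¬¬x`, `{¬¬x} ⊢ x`: the matrix consequence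
of `⟨{0,1}, {1}⟩` coincides with the smallest substitution-invariant
consequence relation containing these rules. -/
theorem negation_fragment_axiomatization :
    ∀ Γ φ, NFSem Γ φ ↔
      ∀ C : Set NF → NF → Prop, IsConsRel C → HasNegRules C → C Γ φ :=
  fun _ _ => ⟨fun h _ hC hR => HasNegRules.derives_of_nfSem hC hR h,
    fun h => h NFSem isConsRel_nfSem hasNegRules_nfSem⟩
end

section
/- Let ⊢¬ be the consequence relation on ¬-formulas determined by the matrix ⟨{0,1}, {1}⟩ with classical negation. If A is a nontrivial ¬-algebra and ⟨A, F⟩ is a reduced model of ⊢¬ (F is a deductive filter and the Leibniz congruence of F is the identity), then: A satisfies ¬¬x = x, ¬ has at most one fixed point in A, and F is either empty or a singleton {a} with ¬a ≠ a. -/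
/-- `F` is a deductive filter of the negation fragment `⊢¬` on the ¬-algebra
`⟨A, neg⟩`: it is closed, under all assignments, under the rules
`{x, ¬x} ⊢ y`, `{x} ⊢ ¬¬x` and `{¬¬x} ⊢ x`. -/
def NegDedFilter {A : Type*} (neg : A → A) (F : Set A) : Prop :=
  (∀ a c : A, a ∈ F → neg a ∈ F → c ∈ F) ∧
  (∀ a : A, a ∈ F → neg (neg a) ∈ F) ∧
  (∀ a : A, neg (neg a) ∈ F → a ∈ F)

/-- The matrix `⟨A, F⟩` is reduced: the largest congruence of `⟨A, neg⟩`
compatible with `F` is the identity, i.e. every congruence compatible with `F`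
is contained in the identity. -/
def NegReduced {A : Type*} (neg : A → A) (F : Set A) : Prop :=
  ∀ θ : A → A → Prop, Equivalence θ →
    (∀ x y, θ x y → θ (neg x) (neg y)) →
    (∀ x y, θ x y → x ∈ F → y ∈ F) →
    ∀ x y, θ x y → x = y

/-!
Agreement of all iterates `¬ⁿx, ¬ⁿy` on membership in `F` is a congruence compatible with `F`
(it is the Leibniz congruence), so in a reduced matrix it is the identity. The rules
`{x} ⊢ ¬¬x` and `{¬¬x} ⊢ x` make `x` and `¬¬x` agree in this sense, hence `¬¬x = x`; then
two elements are equal as soon as they agree on membership of themselves and of their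
negations. Explosion together with nontriviality forbids `a, ¬a ∈ F`, which settles fixed
points (never in `F`) and members of `F` (whose negations are never in `F`).
-/

namespace NegReduced

variable {A : Type*} {neg : A → A} {F : Set A}

theorem eq_of_forall_iterate_mem_iff (hred : NegReduced neg F) {x y : A}
    (h : ∀ n, neg^[n] x ∈ F ↔ neg^[n] y ∈ F) : x = y :=
  hred (fun x y => ∀ n, neg^[n] x ∈ F ↔ neg^[n] y ∈ F)
    ⟨fun _ _ => Iff.rfl, fun h n => (h n).symm, fun h h' n => (h n).trans (h' n)⟩
    (fun _ _ h n => by simpa only [Function.iterate_succ_apply] using h (n + 1))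
    (fun _ _ h => (h 0).mp) x y h

theorem neg_notMem_of_mem [Nontrivial A] (hred : NegReduced neg F) (hF : NegDedFilter neg F)
    {a : A} (ha : a ∈ F) : neg a ∉ F := by
  intro hna
  obtain ⟨x, y, hxy⟩ := exists_pair_ne A
  exact hxy (hred.eq_of_forall_iterate_mem_iff fun n => iff_of_true
    (hF.1 a _ ha hna) (hF.1 a _ ha hna))

theorem involutive (hred : NegReduced neg F) (hF : NegDedFilter neg F) :
    Function.Involutive neg := by
  intro x
  refine hred.eq_of_forall_iterate_mem_iff fun n => ?_
  have hcomm : neg^[n] (neg (neg x)) = neg (neg (neg^[n] x)) := by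
    rw [← Function.iterate_succ_apply, Function.iterate_succ_apply',
      ← Function.iterate_succ_apply, Function.iterate_succ_apply']
  rw [hcomm]
  exact ⟨hF.2.2 _, hF.2.1 _⟩

theorem eq_of_mem_iff_of_neg_mem_iff (hred : NegReduced neg F) (hF : NegDedFilter neg F)
    {x y : A} (h₀ : x ∈ F ↔ y ∈ F) (h₁ : neg x ∈ F ↔ neg y ∈ F) : x = y := by
  refine hred.eq_of_forall_iterate_mem_iff fun n => ?_
  rcases Nat.even_or_odd n with hn | hn
  · simpa only [(hred.involutive hF).iterate_even hn, id_eq] using h₀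
  · simpa only [(hred.involutive hF).iterate_odd hn] using h₁

theorem fixedPoint_subsingleton [Nontrivial A] (hred : NegReduced neg F)
    (hF : NegDedFilter neg F) {x y : A} (hx : neg x = x) (hy : neg y = y) : x = y := by
  have hxF : x ∉ F := fun h => hred.neg_notMem_of_mem hF h (by rwa [hx])
  have hyF : y ∉ F := fun h => hred.neg_notMem_of_mem hF h (by rwa [hy])
  exact hred.eq_of_mem_iff_of_neg_mem_iff hF (iff_of_false hxF hyF)
    (by rw [hx, hy]; exact iff_of_false hxF hyF)

theorem subsingleton [Nontrivial A] (hred : NegReduced neg F) (hF : NegDedFilter neg F) :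
    F.Subsingleton := fun _ ha _ hb =>
  hred.eq_of_mem_iff_of_neg_mem_iff hF (iff_of_true ha hb)
    (iff_of_false (hred.neg_notMem_of_mem hF ha) (hred.neg_notMem_of_mem hF hb))

end NegReduced

/-- if `A` is a nontrivial ¬-algebra and `⟨A, F⟩` is a reduced
model of the negation fragment of classical logic, then `¬¬x = x` holds in
`A`, `¬` has at most one fixed point, and `F` is either empty or a singleton
`{a}` with `¬a ≠ a`. -/
theorem reduced_models_of_negation_fragment
    {A : Type*} [Nontrivial A] (neg : A → A) (F : Set A)
    (hF : NegDedFilter neg F) (hred : NegReduced neg F) :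
    (∀ x, neg (neg x) = x) ∧
    (∀ x y, neg x = x → neg y = y → x = y) ∧
    (F = ∅ ∨ ∃ a : A, F = {a} ∧ neg a ≠ a) := by
  refine ⟨hred.involutive hF, fun _ _ => hred.fixedPoint_subsingleton hF, ?_⟩
  rcases (hred.subsingleton hF).eq_empty_or_singleton with hempty | ⟨a, rfl⟩
  · exact Or.inl hempty
  · exact Or.inr ⟨a, rfl, hred.neg_notMem_of_mem hF rfl⟩
end
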